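/- Let n ≥ 1, let 1 ≤ i < j < k ≤ n be top positions and 1 ≤ l ≤ n a bottom position. Suppose μ and μ' are Brauer diagrams of size n that agree on every edge not incident to any of T_i, T_j, T_k, B_l, and that μ contains the cup {T_i,T_k} and the arc {T_j,B_l}, while μ' contains the arc {T_i,B_l} and the cup {T_j,T_k}. Then χ(μ) ≡ χ(μ') + 1 (mod 2), i.e. (−1)^{χ(μ)} = −(−1)^{χ(μ')}. -/

import Mathlib

open Finset

/-- Vertices of a Brauer diagram of size `n`: `Sum.inl i` is the top point `T i`
and `Sum.inr m` is the bottom point `B m` (positions indexed left to right by `Fin n`). -/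
abbrev BVertex (n : ℕ) := Fin n ⊕ Fin n

/-- A Brauer diagram of size `n` is a perfect matching of the `2n` vertices,
encoded as a fixed-point-free involution. -/
def BrauerDiagram (n : ℕ) :=
  {f : Equiv.Perm (BVertex n) // (∀ x, f (f x) = x) ∧ (∀ x, f x ≠ x)}

instance (n : ℕ) : Fintype (BrauerDiagram n) := Subtype.fintype _

/-- An edge of a Brauer diagram: a cup joins two top points, a cap joins two bottom
points, and an arc joins a top point and a bottom point. In `cup i j` and `cap i j`
we maintain `i < j`, and in `arc i m`, `i` is the top position and `m` the bottom one. -/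
inductive BEdge (n : ℕ)
  | cup : Fin n → Fin n → BEdge n
  | cap : Fin n → Fin n → BEdge n
  | arc : Fin n → Fin n → BEdge n
deriving DecidableEq

/-- The canonical edge with endpoints `x` and `y`. -/
def edgeOf {n : ℕ} : BVertex n → BVertex n → BEdge n
  | .inl i, .inl j => .cup (min i j) (max i j)
  | .inr i, .inr j => .cap (min i j) (max i j)
  | .inl i, .inr m => .arc i m
  | .inr m, .inl i => .arc i m

/-- Whether two edges of a Brauer diagram cross. -/
def crosses {n : ℕ} : BEdge n → BEdge n → Bool
  | .cup i j, .cup k l => decide ((i < k ∧ k < j ∧ j < l) ∨ (k < i ∧ i < l ∧ l < j))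
  | .cap i j, .cap k l => decide ((i < k ∧ k < j ∧ j < l) ∨ (k < i ∧ i < l ∧ l < j))
  | .cup _ _, .cap _ _ => false
  | .cap _ _, .cup _ _ => false
  | .cup i j, .arc k _ => decide (i < k ∧ k < j)
  | .arc k _, .cup i j => decide (i < k ∧ k < j)
  | .cap i j, .arc _ m => decide (i < m ∧ m < j)
  | .arc _ m, .cap i j => decide (i < m ∧ m < j)
  | .arc i m, .arc j m' => decide ((i < j ∧ m' < m) ∨ (j < i ∧ m < m'))

/-- The set of edges of a Brauer diagram. -/
def edges {n : ℕ} (μ : BrauerDiagram n) : Finset (BEdge n) :=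
  Finset.univ.image fun x => edgeOf x (μ.1 x)

/-- The crossing number of a Brauer diagram: the number of unordered pairs of
its edges that cross. -/
def crossingNumber {n : ℕ} (μ : BrauerDiagram n) : ℕ :=
  ((edges μ).offDiag.filter fun p => crosses p.1 p.2 = true).card / 2

/-! Let `E` be the edges of `μ` avoiding `T_i, T_j, T_k, B_l`; they are also the remaining edges
of `μ'`. Counting ordered pairs of crossing edges, `χ(μ)` is the number of crossings inside `E`,
plus the numbers of edges of `E` crossed by `{T_i,T_k}` and by `{T_j,B_l}`, plus one, since these
two cross; `χ(μ')` is the same expression for `{T_i,B_l}` and `{T_j,T_k}`, which do not cross.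
A case check on the position of an edge of `E` relative to `i < j < k` and `l` shows that it
crosses an odd number of `{T_i,T_k}, {T_j,B_l}` iff it crosses an odd number of
`{T_i,B_l}, {T_j,T_k}`. -/

lemma card_filter_add_card_filter_modEq_of_xor_eq {α : Type*} {s : Finset α}
    {p q p' q' : α → Bool} (h : ∀ x ∈ s, (p x ^^ q x) = (p' x ^^ q' x)) :
    #{x ∈ s | p x} + #{x ∈ s | q x} ≡ #{x ∈ s | p' x} + #{x ∈ s | q' x} [MOD 2] := by
  simp only [card_filter, ← sum_add_distrib]
  refine Nat.ModEq.sum fun x hx => ?_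
  have hx := h x hx
  revert hx
  cases p x <;> cases q x <;> cases p' x <;> cases q' x <;> decide

lemma neg_one_pow_eq_neg_of_modEq {a b : ℕ} (h : a ≡ b + 1 [MOD 2]) :
    (-1 : ℤ) ^ a = -(-1) ^ b := by
  rw [neg_one_pow_eq_pow_mod_two, h, ← neg_one_pow_eq_pow_mod_two, pow_succ, mul_neg_one]

section RelatedPairs

variable {α : Type*} [DecidableEq α] {r : α → α → Bool}

variable (r) in
def relatedPairs (s : Finset α) : Finset (α × α) :=
  s.offDiag.filter fun p => r p.1 p.2

lemma card_relatedPairs_insert (hr : ∀ a b, r a b = r b a) {c : α} {s : Finset α}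
    (hc : c ∉ s) :
    #(relatedPairs r (insert c s)) = #(relatedPairs r s) + 2 * #{b ∈ s | r c b} := by
  have hleft : #(({c} ×ˢ s).filter fun p => r p.1 p.2) = #{b ∈ s | r c b} := by
    rw [singleton_product, filter_map, card_map]
    rfl
  have hright : #((s ×ˢ {c}).filter fun p => r p.1 p.2) = #{b ∈ s | r c b} := by
    rw [product_singleton, filter_map, card_map]
    congr 1
    exact filter_congr fun b _ => by simp [hr b c]
  rw [relatedPairs, offDiag_insert hc, filter_union, filter_union, card_union_of_disjoint,
    card_union_of_disjoint, hleft, hright, relatedPairs, two_mul, add_assoc]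
  all_goals
    refine disjoint_left.2 fun p hp hp' => ?_
    simp only [mem_filter, mem_union, mem_offDiag, mem_product, mem_singleton] at hp hp'
    grind

lemma even_card_relatedPairs (hr : ∀ a b, r a b = r b a) (s : Finset α) :
    Even #(relatedPairs r s) := by
  induction s using Finset.induction_on with
  | empty => simp [relatedPairs]
  | insert c s hc ih => rw [card_relatedPairs_insert hr hc]; exact ih.add (even_two_mul _)

end RelatedPairs

variable {n : ℕ}

lemma crosses_comm (a b : BEdge n) : crosses a b = crosses b a := by
  cases a <;> cases b <;> simp only [crosses, decide_eq_decide] <;> tauto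

lemma edgeOf_comm (x y : BVertex n) : edgeOf x y = edgeOf y x := by
  cases x <;> cases y <;> simp only [edgeOf, min_comm, max_comm]

lemma eq_or_eq_of_edgeOf_eq {v w x y : BVertex n} (h : edgeOf v w = edgeOf x y) :
    v = x ∨ v = y := by
  cases v <;> cases w <;> cases x <;> cases y <;>
    simp only [edgeOf, BEdge.cup.injEq, BEdge.cap.injEq, BEdge.arc.injEq, reduceCtorEq,
      Sum.inl.injEq, Sum.inr.injEq] at h ⊢ <;>
    grind

lemma edgeOf_inl_inl_of_lt {a b : Fin n} (h : a < b) : edgeOf (.inl a) (.inl b) = .cup a b := by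
  simp [edgeOf, h.le]

lemma edgeOf_inl_inr (a m : Fin n) : edgeOf (.inl a) (.inr m) = .arc a m := rfl

lemma BrauerDiagram.apply_eq_symm (μ : BrauerDiagram n) {x y : BVertex n} (h : μ.1 x = y) :
    μ.1 y = x :=
  h ▸ μ.2.1 x

def edgesOutside (μ : BrauerDiagram n) (S : Finset (BVertex n)) : Finset (BEdge n) :=
  Sᶜ.image fun v => edgeOf v (μ.1 v)

lemma edgesOutside_congr {μ μ' : BrauerDiagram n} {S : Finset (BVertex n)}
    (h : ∀ v ∉ S, μ.1 v = μ'.1 v) : edgesOutside μ S = edgesOutside μ' S :=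
  image_congr fun v hv => by rw [h v (by simpa using hv)]

lemma edgeOf_notMem_edgesOutside (μ : BrauerDiagram n) {S : Finset (BVertex n)}
    {x y : BVertex n} (hx : x ∈ S) (hy : y ∈ S) : edgeOf x y ∉ edgesOutside μ S := by
  simp only [edgesOutside, mem_image, mem_compl, not_exists, not_and]
  intro v hv he
  rcases eq_or_eq_of_edgeOf_eq he with rfl | rfl <;> contradiction

lemma exists_of_mem_edgesOutside {μ : BrauerDiagram n} {x y z w : BVertex n}
    (hxy : μ.1 x = y) (hzw : μ.1 z = w) {e : BEdge n}
    (he : e ∈ edgesOutside μ {x, y, z, w}) :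
    ∃ v ∉ ({x, y, z, w} : Finset _), μ.1 v ∉ ({x, y, z, w} : Finset _) ∧ e = edgeOf v (μ.1 v) := by
  obtain ⟨v, hv, rfl⟩ := mem_image.1 he
  rw [mem_compl] at hv
  refine ⟨v, hv, fun hμv => hv ?_, rfl⟩
  simp only [mem_insert, mem_singleton] at hμv ⊢
  rcases hμv with h | h | h | h <;> have := μ.apply_eq_symm h <;> grind

lemma edges_eq_insert_insert (μ : BrauerDiagram n) {x y z w : BVertex n}
    (hxy : μ.1 x = y) (hzw : μ.1 z = w) :
    edges μ = insert (edgeOf x y) (insert (edgeOf z w) (edgesOutside μ {x, y, z, w})) := by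
  rw [edges, ← union_compl {x, y, z, w}, image_union, edgesOutside]
  simp only [image_insert, image_singleton, hxy, hzw, μ.apply_eq_symm hxy, μ.apply_eq_symm hzw,
    edgeOf_comm y x, edgeOf_comm w z]
  ext e
  simp only [mem_union, mem_insert, mem_singleton]
  tauto

lemma crossingNumber_eq_of_apply_eq (μ : BrauerDiagram n) {x y z w : BVertex n}
    (hxy : μ.1 x = y) (hzw : μ.1 z = w) (hne : edgeOf x y ≠ edgeOf z w) :
    crossingNumber μ = #(relatedPairs crosses (edgesOutside μ {x, y, z, w})) / 2
      + #{e ∈ edgesOutside μ {x, y, z, w} | crosses (edgeOf x y) e}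
      + #{e ∈ edgesOutside μ {x, y, z, w} | crosses (edgeOf z w) e}
      + (crosses (edgeOf x y) (edgeOf z w)).toNat := by
  change #(relatedPairs crosses (edges μ)) / 2 = _
  rw [edges_eq_insert_insert μ hxy hzw]
  set E := edgesOutside μ {x, y, z, w}
  have hxyE : edgeOf x y ∉ E := edgeOf_notMem_edgesOutside μ (by simp) (by simp)
  have hzwE : edgeOf z w ∉ E := edgeOf_notMem_edgesOutside μ (by simp) (by simp)
  obtain ⟨t, ht⟩ := even_card_relatedPairs crosses_comm E
  rw [card_relatedPairs_insert crosses_comm (by simp [hne, hxyE]),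
    card_relatedPairs_insert crosses_comm hzwE, filter_insert, ht]
  cases crosses (edgeOf x y) (edgeOf z w)
  · simp only [Bool.false_eq_true, if_false, Bool.toNat_false]
    omega
  · simp only [if_true, Bool.toNat_true, card_insert_of_notMem (fun h => hzwE (mem_filter.1 h).1)]
    omega

lemma crosses_cup_xor_arc_eq {i j k l : Fin n} (hij : i < j) (hjk : j < k)
    {v w : BVertex n}
    (hv : v ∉ ({.inl i, .inl k, .inl j, .inr l} : Finset (BVertex n)))
    (hw : w ∉ ({.inl i, .inl k, .inl j, .inr l} : Finset (BVertex n))) :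
    (crosses (.cup i k) (edgeOf v w) ^^ crosses (.arc j l) (edgeOf v w)) =
      (crosses (.arc i l) (edgeOf v w) ^^ crosses (.cup j k) (edgeOf v w)) := by
  simp only [mem_insert, mem_singleton, not_or] at hv hw
  rw [Fin.lt_def] at hij hjk
  cases v <;> cases w <;>
    simp only [edgeOf, crosses, Fin.lt_def, Fin.coe_min, Fin.coe_max, Sum.inl.injEq,
      Sum.inr.injEq, Fin.ext_iff, reduceCtorEq] at hv hw ⊢ <;>
    grind

lemma card_filter_crosses_cup_add_arc_modEq {μ : BrauerDiagram n} {i j k l : Fin n}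
    (hij : i < j) (hjk : j < k) (hcup : μ.1 (.inl i) = .inl k) (harc : μ.1 (.inl j) = .inr l) :
    #{e ∈ edgesOutside μ {.inl i, .inl k, .inl j, .inr l} | crosses (.cup i k) e} +
        #{e ∈ edgesOutside μ {.inl i, .inl k, .inl j, .inr l} | crosses (.arc j l) e} ≡
      #{e ∈ edgesOutside μ {.inl i, .inl k, .inl j, .inr l} | crosses (.arc i l) e} +
        #{e ∈ edgesOutside μ {.inl i, .inl k, .inl j, .inr l} | crosses (.cup j k) e} [MOD 2] :=
  card_filter_add_card_filter_modEq_of_xor_eq fun e he => by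
    obtain ⟨v, hv, hμv, rfl⟩ := exists_of_mem_edgesOutside hcup harc he
    exact crosses_cup_xor_arc_eq hij hjk hv hμv

theorem cup_arc_swap_parity_general (n : ℕ) (i j k l : Fin n)
    (hij : i < j) (hjk : j < k) (μ μ' : BrauerDiagram n)
    (hcup : μ.1 (Sum.inl i) = Sum.inl k)
    (harc : μ.1 (Sum.inl j) = Sum.inr l)
    (harc' : μ'.1 (Sum.inl i) = Sum.inr l)
    (hcup' : μ'.1 (Sum.inl j) = Sum.inl k)
    (hagree : ∀ x : BVertex n, x ≠ Sum.inl i → x ≠ Sum.inl j →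
      x ≠ Sum.inl k → x ≠ Sum.inr l → μ.1 x = μ'.1 x) :
    (-1 : ℤ) ^ crossingNumber μ = -(-1 : ℤ) ^ crossingNumber μ' := by
  have hμ := crossingNumber_eq_of_apply_eq μ hcup harc (by simp [edgeOf])
  have hμ' := crossingNumber_eq_of_apply_eq μ' harc' hcup' (by simp [edgeOf])
  set S : Finset (BVertex n) := {.inl i, .inl k, .inl j, .inr l}
  have hS : ({.inl i, .inr l, .inl j, .inl k} : Finset (BVertex n)) = S := by
    ext; simp only [S, mem_insert, mem_singleton]; tauto
  have hE : edgesOutside μ' S = edgesOutside μ S :=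
    edgesOutside_congr fun v hv => by
      simp only [S, mem_insert, mem_singleton, not_or] at hv
      exact (hagree v hv.1 hv.2.2.1 hv.2.1 hv.2.2.2).symm
  rw [hS, hE, edgeOf_inl_inl_of_lt hjk, edgeOf_inl_inr] at hμ'
  rw [edgeOf_inl_inl_of_lt (hij.trans hjk), edgeOf_inl_inr] at hμ
  have hcross : crosses (.cup i k) (.arc j l) = true := by simp [crosses, hij, hjk]
  have hnoncross : crosses (.arc i l) (.cup j k) = false := by simp [crosses, hij.not_gt]
  apply neg_one_pow_eq_neg_of_modEq
  rw [hμ, hμ', hcross, hnoncross, Bool.toNat_true, Bool.toNat_false, add_zero]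
  simpa only [add_assoc] using
    ((card_filter_crosses_cup_add_arc_modEq hij hjk hcup harc).add_left _).add_right 1

/-- Lemma (c): replacing the cup `{T_i,T_k}` and the arc `{T_j,B_l}` by the arc
`{T_i,B_l}` and the cup `{T_j,T_k}` (where `i < j < k` are top positions and `l` is
a bottom position), all other edges remaining the same, changes the parity of the
crossing number. -/
theorem cup_arc_swap_parity (n : ℕ) (hn : 1 ≤ n) (i j k l : Fin n)
    (hij : i < j) (hjk : j < k) (μ μ' : BrauerDiagram n)
    (hcup : μ.1 (Sum.inl i) = Sum.inl k)
    (harc : μ.1 (Sum.inl j) = Sum.inr l)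
    (harc' : μ'.1 (Sum.inl i) = Sum.inr l)
    (hcup' : μ'.1 (Sum.inl j) = Sum.inl k)
    (hagree : ∀ x : BVertex n, x ≠ Sum.inl i → x ≠ Sum.inl j →
      x ≠ Sum.inl k → x ≠ Sum.inr l → μ.1 x = μ'.1 x) :
    (-1 : ℤ) ^ crossingNumber μ = -(-1 : ℤ) ^ crossingNumber μ' :=
  cup_arc_swap_parity_general n i j k l hij hjk μ μ' hcup harc harc' hcup' hagree
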